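/- arXiv:2012.03273 — 3 statements merged into one kernel-verified Lean document; each statement's English description precedes it below -/
import Mathlib

section
/- With κ as above, the right derivative of κ at 0 equals a + ∫_{(0,1)} (log v) ρ(dv), where the integral may be −∞. In particular, if a < ∫_{(0,1)} (−log v) ρ(dv), then κ is strictly decreasing on a right neighbourhood of 0, and hence inf_{q≥0} κ(q) < κ(0). -/
open MeasureTheory Set Filter Topology

open scoped ENNReal

/-!
For `v ∈ (0, 1)` the difference quotient `(1 - v ^ q) / q` is nonnegative, bounded by `-log v`
(as `log x ≤ x - 1`) and tends to `-log v` as `q ↓ 0`. Fatou's lemma and this bound give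
convergence of its `ρ`-integral to `∫ (-log v) dρ` even when the latter is infinite; this
integral is `a` minus the right derivative of `κ` at `0`.

For the second part, `κ` is convex and continuous on `[0, ∞)`, being `a q` plus an integral of the
convex functions `q ↦ v ^ q`, which are bounded by `1`. A negative right derivative gives `z > 0`
with `κ z < κ 0`, continuity gives `ε ∈ (0, z)` with `κ z < κ ε`, and convexity then forces `κ` to
be strictly decreasing on `[0, ε]`.
-/

theorem MeasureTheory.tendsto_lintegral_of_tendsto_of_lintegral_le {α ι : Type*}
    [MeasurableSpace α] {μ : Measure α} {l : Filter ι} [l.IsCountablyGenerated]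
    {f : ι → α → ℝ≥0∞} {g : α → ℝ≥0∞} (hf : ∀ i, AEMeasurable (f i) μ)
    (hlim : ∀ᵐ x ∂μ, Tendsto (fun i => f i x) l (𝓝 (g x)))
    (hle : ∀ᶠ i in l, ∫⁻ x, f i x ∂μ ≤ ∫⁻ x, g x ∂μ) :
    Tendsto (fun i => ∫⁻ x, f i x ∂μ) l (𝓝 (∫⁻ x, g x ∂μ)) := by
  rcases l.eq_or_neBot with rfl | _
  · exact tendsto_bot
  refine tendsto_of_le_liminf_of_limsup_le ?_ (limsup_le_of_le (by isBoundedDefault) hle)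
  calc ∫⁻ x, g x ∂μ = ∫⁻ x, liminf (fun i => f i x) l ∂μ :=
        lintegral_congr_ae (hlim.mono fun _ hx => hx.liminf_eq.symm)
    _ ≤ _ := lintegral_liminf_le' hf

theorem ConvexOn.integral {E α : Type*} [AddCommMonoid E] [Module ℝ E] [MeasurableSpace α]
    {μ : Measure α} {s : Set E} {f : E → α → ℝ} (hs : Convex ℝ s)
    (hf : ∀ᵐ x ∂μ, ConvexOn ℝ s (f · x)) (hint : ∀ q ∈ s, Integrable (f q) μ) :
    ConvexOn ℝ s fun q => ∫ x, f q x ∂μ := by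
  refine ⟨hs, fun p hp q hq a b ha hb hab => ?_⟩
  calc ∫ x, f (a • p + b • q) x ∂μ ≤ ∫ x, a * f p x + b * f q x ∂μ :=
        integral_mono_ae (hint _ (hs hp hq ha hb hab)) (((hint p hp).const_mul a).add
          ((hint q hq).const_mul b)) (hf.mono fun x hx => hx.2 hp hq ha hb hab)
    _ = a • ∫ x, f p x ∂μ + b • ∫ x, f q x ∂μ := by
        rw [integral_add ((hint p hp).const_mul a) ((hint q hq).const_mul b), integral_const_mul,
          integral_const_mul, smul_eq_mul, smul_eq_mul]

theorem ConvexOn.exists_strictAntiOn_Icc {f : ℝ → ℝ} {x z : ℝ} (hf : ConvexOn ℝ (Ici x) f)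
    (hc : ContinuousWithinAt f (Ici x) x) (hxz : x < z) (hfz : f z < f x) :
    ∃ ε > x, StrictAntiOn f (Icc x ε) := by
  have hright : Tendsto f (𝓝[>] x) (𝓝 (f x)) :=
    hc.mono_left (nhdsWithin_mono _ Ioi_subset_Ici_self)
  obtain ⟨ε, hfε, hε⟩ := ((hright.eventually (lt_mem_nhds hfz)).and
    (Ioo_mem_nhdsGT hxz)).exists
  refine ⟨ε, hε.1, ?_⟩
  rw [← Ici_inter_Iic]
  exact hf.strictAntiOn (mem_Ici.2 hxz.le) hε.2 hfε

theorem Real.one_sub_rpow_div_le_neg_log {v q : ℝ} (hv : 0 < v) (hq : 0 < q) :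
    (1 - v ^ q) / q ≤ -Real.log v := by
  have h := Real.log_le_sub_one_of_pos (Real.rpow_pos_of_pos hv q)
  rw [Real.log_rpow hv] at h
  rw [div_le_iff₀ hq]
  linarith

theorem Real.tendsto_one_sub_rpow_div {v : ℝ} (hv : 0 < v) :
    Tendsto (fun q => (1 - v ^ q) / q) (𝓝[≠] 0) (𝓝 (-Real.log v)) := by
  have hderiv : HasDerivAt (fun q : ℝ => v ^ q) (Real.log v) 0 := by
    simpa using (Real.hasStrictDerivAt_const_rpow hv 0).hasDerivAt
  refine (hasDerivAt_iff_tendsto_slope.1 hderiv).neg.congr fun q => ?_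
  simp only [slope_fun_def_field, Real.rpow_zero, sub_zero]
  ring

noncomputable def rpowMoment (ρ : Measure ℝ) (q : ℝ) : ℝ := ∫ v, v ^ q ∂ρ

section rpowMoment

variable {ρ : Measure ℝ}

theorem norm_rpow_le_one_ae (hρ : ∀ᵐ v ∂ρ, v ∈ Ioo (0:ℝ) 1) {q : ℝ} (hq : 0 ≤ q) :
    ∀ᵐ v ∂ρ, ‖v ^ q‖ ≤ 1 :=
  hρ.mono fun v hv => by
    rw [Real.norm_of_nonneg (Real.rpow_nonneg hv.1.le q)]
    exact Real.rpow_le_one hv.1.le hv.2.le hq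

theorem rpowMoment_nonneg (hρ : ∀ᵐ v ∂ρ, 0 ≤ v) (q : ℝ) : 0 ≤ rpowMoment ρ q :=
  integral_nonneg_of_ae (hρ.mono fun _ hv => Real.rpow_nonneg hv q)

theorem tendsto_lintegral_one_sub_rpow_div (hρ : ∀ᵐ v ∂ρ, 0 < v) :
    Tendsto (fun q => ∫⁻ v, ENNReal.ofReal ((1 - v ^ q) / q) ∂ρ) (𝓝[>] 0)
      (𝓝 (∫⁻ v, ENNReal.ofReal (-Real.log v) ∂ρ)) :=
  tendsto_lintegral_of_tendsto_of_lintegral_le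
    (fun q => ((measurable_const.sub (measurable_id.pow_const q)).div_const q).ennreal_ofReal
      |>.aemeasurable)
    (hρ.mono fun _ hv => (ENNReal.continuous_ofReal.tendsto _).comp
      ((Real.tendsto_one_sub_rpow_div hv).mono_left
        (nhdsWithin_mono _ fun _ hq => ne_of_gt hq)))
    (eventually_nhdsWithin_of_forall fun _ hq => lintegral_mono_ae (hρ.mono fun _ hv =>
      ENNReal.ofReal_le_ofReal (Real.one_sub_rpow_div_le_neg_log hv hq)))

variable [IsFiniteMeasure ρ]

theorem integrable_rpow (hρ : ∀ᵐ v ∂ρ, v ∈ Ioo (0:ℝ) 1) {q : ℝ} (hq : 0 ≤ q) :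
    Integrable (fun v => v ^ q) ρ :=
  .of_bound (measurable_id.pow_const q).aestronglyMeasurable 1 (norm_rpow_le_one_ae hρ hq)

theorem convexOn_rpowMoment (hρ : ∀ᵐ v ∂ρ, v ∈ Ioo (0:ℝ) 1) :
    ConvexOn ℝ (Ici 0) (rpowMoment ρ) :=
  ConvexOn.integral (convex_Ici 0)
    (hρ.mono fun _ hv => (convexOn_rpow_left hv.1).subset (subset_univ _) (convex_Ici 0))
    fun _ hq => integrable_rpow hρ hq

theorem continuousOn_rpowMoment (hρ : ∀ᵐ v ∂ρ, v ∈ Ioo (0:ℝ) 1) :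
    ContinuousOn (rpowMoment ρ) (Ici 0) :=
  continuousOn_of_dominated (fun _ hq => (integrable_rpow hρ hq).aestronglyMeasurable)
    (fun _ hq => norm_rpow_le_one_ae hρ hq) (integrable_const 1)
    (hρ.mono fun _ hv _ _ => (Real.continuousAt_const_rpow hv.1.ne').continuousWithinAt)

theorem rpowMoment_slope_zero (hρ : ∀ᵐ v ∂ρ, v ∈ Ioo (0:ℝ) 1) {q : ℝ} (hq : 0 < q) :
    (rpowMoment ρ q - rpowMoment ρ 0) / q = -∫ v, (1 - v ^ q) / q ∂ρ := by
  simp only [rpowMoment, Real.rpow_zero]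
  rw [integral_div, integral_sub (integrable_const 1) (integrable_rpow hρ hq.le)]
  ring

theorem tendsto_rpowMoment_slope_zero (hρ : ∀ᵐ v ∂ρ, v ∈ Ioo (0:ℝ) 1) :
    Tendsto (fun q => (((rpowMoment ρ q - rpowMoment ρ 0) / q : ℝ) : EReal)) (𝓝[>] 0)
      (𝓝 (-(∫⁻ v, ENNReal.ofReal (-Real.log v) ∂ρ : EReal))) := by
  refine ((continuous_neg.tendsto _).comp ((continuous_coe_ennreal_ereal.tendsto _).comp
    (tendsto_lintegral_one_sub_rpow_div (hρ.mono fun _ hv => hv.1)))).congr' ?_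
  filter_upwards [self_mem_nhdsWithin] with q hq
  have hnonneg : 0 ≤ᵐ[ρ] fun v => (1 - v ^ q) / q := hρ.mono fun v hv =>
    div_nonneg (sub_nonneg.2 (Real.rpow_le_one hv.1.le hv.2.le (le_of_lt hq))) (le_of_lt hq)
  have hint : Integrable (fun v => (1 - v ^ q) / q) ρ :=
    ((integrable_const 1).sub (integrable_rpow hρ (le_of_lt hq))).div_const q
  rw [rpowMoment_slope_zero hρ hq, Function.comp_apply, Function.comp_apply,
    ← ofReal_integral_eq_lintegral_ofReal hint hnonneg,
    EReal.coe_ennreal_ofReal, max_eq_left (integral_nonneg_of_ae hnonneg), EReal.coe_neg]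

end rpowMoment

noncomputable def cumulant (a c : ℝ) (ρ : Measure ℝ) (q : ℝ) : ℝ := a * q + rpowMoment ρ q - c

section cumulant

variable {ρ : Measure ℝ} (a c : ℝ)

theorem bddBelow_cumulant_image_Ici (ha : 0 ≤ a) (hρ : ∀ᵐ v ∂ρ, 0 ≤ v) :
    BddBelow (cumulant a c ρ '' Ici 0) := by
  refine ⟨-c, ?_⟩
  rintro _ ⟨q, hq, rfl⟩
  unfold cumulant
  nlinarith [rpowMoment_nonneg hρ q, mul_nonneg ha hq]

variable [IsFiniteMeasure ρ]

theorem tendsto_cumulant_slope_zero (hρ : ∀ᵐ v ∂ρ, v ∈ Ioo (0:ℝ) 1) :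
    Tendsto (fun q => (((cumulant a c ρ q - cumulant a c ρ 0) / q : ℝ) : EReal)) (𝓝[>] 0)
      (𝓝 ((a : EReal) - (∫⁻ v, ENNReal.ofReal (-Real.log v) ∂ρ : EReal))) := by
  refine ((EReal.continuousAt_add (.inl (EReal.coe_ne_top a)) (.inl (EReal.coe_ne_bot a)))
    |>.tendsto.comp (tendsto_const_nhds.prodMk_nhds (tendsto_rpowMoment_slope_zero hρ))).congr' ?_
  filter_upwards [self_mem_nhdsWithin] with q hq
  have hsplit : (cumulant a c ρ q - cumulant a c ρ 0) / q
      = a + (rpowMoment ρ q - rpowMoment ρ 0) / q := by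
    have hq0 : q ≠ 0 := ne_of_gt hq
    simp only [cumulant]
    field_simp
    ring
  rw [Function.comp_apply, hsplit, EReal.coe_add]
  rfl

theorem convexOn_cumulant (hρ : ∀ᵐ v ∂ρ, v ∈ Ioo (0:ℝ) 1) :
    ConvexOn ℝ (Ici 0) (cumulant a c ρ) :=
  (((LinearMap.mulLeft ℝ a).convexOn (convex_Ici 0)).add (convexOn_rpowMoment hρ)
    |>.add_const (-c)).congr fun _ _ => (sub_eq_add_neg _ _).symm

theorem continuousOn_cumulant (hρ : ∀ᵐ v ∂ρ, v ∈ Ioo (0:ℝ) 1) :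
    ContinuousOn (cumulant a c ρ) (Ici 0) := by
  have := continuousOn_rpowMoment hρ
  unfold cumulant
  fun_prop

end cumulant

theorem cumulant_rightDeriv_at_zero_general (a k B : ℝ) (ha : 0 < a)
    (ρ : Measure ℝ) [IsFiniteMeasure ρ] (hsupp : ∀ᵐ v ∂ρ, v ∈ Ioo (0:ℝ) 1)
    (κ : ℝ → ℝ) (hκ : ∀ q, κ q = a * q + (∫ v, v ^ q ∂ρ) - (B + k)) :
    Tendsto (fun q => (((κ q - κ 0) / q : ℝ) : EReal)) (𝓝[>] (0:ℝ))
      (𝓝 ((a : EReal) - ((∫⁻ v, ENNReal.ofReal (-Real.log v) ∂ρ) : EReal)))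
    ∧ ((ENNReal.ofReal a < ∫⁻ v, ENNReal.ofReal (-Real.log v) ∂ρ) →
        (∃ ε > (0:ℝ), StrictAntiOn κ (Icc 0 ε)) ∧ sInf (κ '' Ici 0) < κ 0) := by
  obtain rfl : κ = cumulant a (B + k) ρ := funext hκ
  set L := ∫⁻ v, ENNReal.ofReal (-Real.log v) ∂ρ
  have hslope := tendsto_cumulant_slope_zero a (B + k) hsupp
  refine ⟨hslope, fun hlt => ?_⟩
  have hlim_neg : (a : EReal) - L < 0 := by
    refine (EReal.sub_neg (.inl (EReal.coe_ne_top a)) (.inl (EReal.coe_ne_bot a))).2 ?_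
    calc (a : EReal) ≤ (ENNReal.ofReal a : EReal) := by
          rw [EReal.coe_ennreal_ofReal]; exact_mod_cast le_max_left a 0
      _ < L := EReal.coe_ennreal_lt_coe_ennreal_iff.2 hlt
  obtain ⟨z, hz, hκz⟩ : ∃ z > 0, cumulant a (B + k) ρ z < cumulant a (B + k) ρ 0 := by
    obtain ⟨z, hzneg, hz⟩ :=
      ((hslope.eventually (gt_mem_nhds hlim_neg)).and self_mem_nhdsWithin).exists
    exact ⟨z, hz, sub_neg.1 (neg_of_div_neg_left (by exact_mod_cast hzneg) hz.le)⟩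
  exact ⟨(convexOn_cumulant a _ hsupp).exists_strictAntiOn_Icc
      ((continuousOn_cumulant a _ hsupp).continuousWithinAt self_mem_Ici) hz hκz,
    csInf_lt_of_lt (bddBelow_cumulant_image_Ici _ _ ha.le (hsupp.mono fun _ hv => hv.1.le))
      ⟨z, hz.le, rfl⟩ hκz⟩

/-- The right derivative of the cumulant `κ` at `0` equals `a + ∫ log v ρ(dv)`
(possibly `−∞`, which is why the limit is taken in `EReal`); and if
`a < ∫ (−log v) ρ(dv)` then `κ` is strictly decreasing on a right neighbourhood of `0`,
hence `inf_{q ≥ 0} κ(q) < κ(0)`. -/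
theorem cumulant_rightDeriv_at_zero (a k B : ℝ) (ha : 0 < a) (hk : 0 ≤ k)
    (ρ : Measure ℝ) [IsFiniteMeasure ρ] (hsupp : ∀ᵐ v ∂ρ, v ∈ Ioo (0:ℝ) 1)
    (hB : ∫ v, v ∂ρ = B)
    (κ : ℝ → ℝ) (hκ : ∀ q, κ q = a * q + (∫ v, v ^ q ∂ρ) - (B + k)) :
    Tendsto (fun q => (((κ q - κ 0) / q : ℝ) : EReal)) (𝓝[>] (0:ℝ))
      (𝓝 ((a : EReal) - ((∫⁻ v, ENNReal.ofReal (-Real.log v) ∂ρ) : EReal)))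
    ∧ ((ENNReal.ofReal a < ∫⁻ v, ENNReal.ofReal (-Real.log v) ∂ρ) →
        (∃ ε > (0:ℝ), StrictAntiOn κ (Icc 0 ε)) ∧ sInf (κ '' Ici 0) < κ 0) :=
  cumulant_rightDeriv_at_zero_general a k B ha ρ hsupp κ hκ
end

section
/- Let (U_t) be a nonnegative process adapted to F_∞ := σ(∪_t F_t) on a filtered probability space, with E[sup_{t≥0} U_t] < ∞, such that t ↦ E[U_t | F_t] is càdlàg. If E[U_t | F_∞] → Y almost surely as t → ∞, then E[U_t | F_t] → Y almost surely as t → ∞. -/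
/-!
Put `ℱ∞ = ⨆ t, ℱ t` and `W t = E[U t | ℱ∞]`, so that `E[U t | ℱ t] = E[W t | ℱ t]` by the tower
property. Along the rationals this is Hunt's lemma: for `q ≥ r`,
`|E[W q | ℱ q] - E[Y | ℱ q]| ≤ E[sup_{p ≥ r} |W p - Y| | ℱ q]`, and Lévy's upward theorem gives
`E[Y | ℱ q] → E[Y | ℱ∞] = Y`. In both cases the error is bounded by the martingale `E[H | ℱ q]` of a
nonnegative `H` with small `L¹` norm, whose supremum over the countably many rational times is
controlled by Doob's maximal inequality. Right-continuity of `t ↦ E[U t | ℱ t]` passes from the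
rationals to all real times.
-/

open MeasureTheory Set Filter Topology

namespace MeasureTheory

variable {Ω ι κ : Type*} {m : MeasurableSpace Ω} {μ : Measure Ω}

def Filtration.comp [Preorder ι] [Preorder κ] (ℱ : Filtration ι m) {τ : κ → ι}
    (hτ : Monotone τ) : Filtration κ m where
  seq k := ℱ (τ k)
  mono' _ _ h := ℱ.mono (hτ h)
  le' k := ℱ.le (τ k)

theorem Filtration.iSup_comp [Preorder ι] [Preorder κ] (ℱ : Filtration ι m) {τ : κ → ι}
    (hτ : Monotone τ) (hτ_cofinal : ∀ i, ∃ k, i ≤ τ k) :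
    ⨆ k, ℱ.comp hτ k = ⨆ i, ℱ i := by
  refine le_antisymm (iSup_le fun k => le_iSup (fun i => ℱ i) (τ k)) (iSup_le fun i => ?_)
  obtain ⟨k, hk⟩ := hτ_cofinal i
  exact (ℱ.mono hk).trans (le_iSup (fun k => ℱ.comp hτ k) k)

theorem ae_abs_condExp_le_condExp {m' : MeasurableSpace Ω} {f S : Ω → ℝ}
    (hf : AEStronglyMeasurable[m] f μ) (hS : Integrable S μ) (hfS : ∀ᵐ ω ∂μ, |f ω| ≤ S ω) :
    ∀ᵐ ω ∂μ, |μ[f|m'] ω| ≤ μ[S|m'] ω := by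
  filter_upwards [abs_condExp_ae_le_condExp_abs (m := m') f,
    condExp_mono (m := m') (hS.mono' hf hfS).abs hS hfS] with ω h_abs h_mono
  exact h_abs.trans h_mono

theorem aestronglyMeasurable_of_tendsto_ae_of_stronglyMeasurable {E : Type*} [TopologicalSpace E]
    [Nonempty E] [TopologicalSpace.IsCompletelyMetrizableSpace E] [Countable ι] {l : Filter ι}
    [l.IsCountablyGenerated] [l.NeBot] {m' : MeasurableSpace Ω} {f : ι → Ω → E} {g : Ω → E}
    (hf : ∀ i, StronglyMeasurable[m'] (f i)) (hfg : ∀ᵐ ω ∂μ, Tendsto (f · ω) l (𝓝 (g ω))) :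
    AEStronglyMeasurable[m'] g μ :=
  ⟨fun ω => limUnder l (f · ω), @StronglyMeasurable.limUnder ι Ω E m' _ _ l _ f _ _ hf, by
    filter_upwards [hfg] with ω h using h.limUnder_eq.symm⟩

theorem ae_abs_le_of_ae_tendsto [Countable ι] {l : Filter ι} [l.NeBot] {V : ι → Ω → ℝ}
    {Y G : Ω → ℝ} (hVG : ∀ i, ∀ᵐ ω ∂μ, |V i ω| ≤ G ω)
    (hVY : ∀ᵐ ω ∂μ, Tendsto (fun i => V i ω) l (𝓝 (Y ω))) :
    ∀ᵐ ω ∂μ, |Y ω| ≤ G ω := by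
  filter_upwards [ae_all_iff.2 hVG, hVY] with ω hG hY
  exact le_of_tendsto hY.abs (Eventually.of_forall hG)

theorem condExp_ae_eq_of_ae_tendsto [Countable ι] {l : Filter ι} [l.IsCountablyGenerated]
    [l.NeBot] {m' : MeasurableSpace Ω} (hm' : m' ≤ m) [SigmaFinite (μ.trim hm')]
    {V : ι → Ω → ℝ} {Y G : Ω → ℝ} (hV : ∀ i, StronglyMeasurable[m'] (V i))
    (hG : Integrable G μ) (hVG : ∀ i, ∀ᵐ ω ∂μ, |V i ω| ≤ G ω)
    (hVY : ∀ᵐ ω ∂μ, Tendsto (fun i => V i ω) l (𝓝 (Y ω))) :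
    μ[Y|m'] =ᵐ[μ] Y := by
  have hY : AEStronglyMeasurable[m'] Y μ :=
    aestronglyMeasurable_of_tendsto_ae_of_stronglyMeasurable hV hVY
  exact condExp_of_aestronglyMeasurable' hm' hY
    (hG.mono' (hY.mono hm') (ae_abs_le_of_ae_tendsto hVG hVY))

theorem tendsto_iSup_Ici_abs_sub [LinearOrder ι] [Nonempty ι] {v : ι → ℝ} {y : ℝ}
    (h : Tendsto v atTop (𝓝 y)) : Tendsto (fun j : ι => ⨆ i : Ici j, |v i - y|) atTop (𝓝 0) := by
  refine tendsto_order.2 ⟨fun a ha => Eventually.of_forall fun j =>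
    ha.trans_le (Real.iSup_nonneg fun i => abs_nonneg _), fun a ha => ?_⟩
  obtain ⟨i₀, hi₀⟩ := eventually_atTop.1 (Metric.tendsto_nhds.1 h (a / 2) (half_pos ha))
  filter_upwards [eventually_ge_atTop i₀] with j hj
  exact (ciSup_le fun i : Ici j => (hi₀ i (hj.trans i.2)).le).trans_lt (half_lt_self ha)

section Maximal

variable [LinearOrder ι] (ℱ : Filtration ι m) {C : Ω → ℝ}

theorem Filtration.measurableSet_exists_le_condExp {T : Finset ι} {j : ι} (hT : ∀ i ∈ T, i ≤ j)
    (ε : ℝ) : MeasurableSet[ℱ j] {ω | ∃ i ∈ T, ε ≤ μ[C|ℱ i] ω} := by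
  have hA : {ω | ∃ i ∈ T, ε ≤ μ[C|ℱ i] ω} = ⋃ i ∈ T, {ω | ε ≤ μ[C|ℱ i] ω} := by
    ext ω
    simp
  rw [hA]
  refine Finset.measurableSet_biUnion T fun i hi => ?_
  exact (stronglyMeasurable_condExp.mono (ℱ.mono (hT i hi))).measurable measurableSet_Ici

theorem mul_measureReal_exists_le_condExp_le_setIntegral [IsFiniteMeasure μ]
    (hC : Integrable C μ) (ε : ℝ) (T : Finset ι) :
    ε * μ.real {ω | ∃ i ∈ T, ε ≤ μ[C|ℱ i] ω} ≤ ∫ ω in {ω | ∃ i ∈ T, ε ≤ μ[C|ℱ i] ω}, C ω ∂μ := by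
  classical
  induction T using Finset.induction_on_max with
  | empty => simp
  | insert a T hlt ih =>
    set A := {ω | ∃ i ∈ T, ε ≤ μ[C|ℱ i] ω}
    set E := {ω | ε ≤ μ[C|ℱ a] ω} \ A
    have hA : MeasurableSet[ℱ a] A :=
      ℱ.measurableSet_exists_le_condExp (fun i hi => (hlt i hi).le) ε
    have hE : MeasurableSet[ℱ a] E :=
      (stronglyMeasurable_condExp.measurable (measurableSet_Ici (a := ε))).diff hA
    have hdisj : Disjoint A E := disjoint_sdiff_right
    have hunion : {ω | ∃ i ∈ insert a T, ε ≤ μ[C|ℱ i] ω} = A ∪ E := by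
      rw [Set.union_sdiff_self, union_comm]
      ext ω
      simp [A]
    have hE_le : ε * μ.real E ≤ ∫ ω in E, C ω ∂μ := by
      rw [← setIntegral_condExp (ℱ.le a) hC hE]
      exact setIntegral_ge_of_const_le_real (ℱ.le a _ hE) (measure_ne_top μ _)
        (fun ω hω => hω.1) integrable_condExp.integrableOn
    rw [hunion, measureReal_union hdisj (ℱ.le a _ hE),
      setIntegral_union hdisj (ℱ.le a _ hE) hC.integrableOn hC.integrableOn]
    linarith

theorem mul_measureReal_exists_le_condExp_le_integral [Countable ι] [IsFiniteMeasure μ]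
    (hC : Integrable C μ) (hC0 : 0 ≤ C) (ε : ℝ) :
    ε * μ.real {ω | ∃ i, ε ≤ μ[C|ℱ i] ω} ≤ ∫ ω, C ω ∂μ := by
  set A : Finset ι → Set Ω := fun T => {ω | ∃ i ∈ T, ε ≤ μ[C|ℱ i] ω}
  have hA_mono : Monotone A := fun T T' h ω ⟨i, hi, hω⟩ => ⟨i, h hi, hω⟩
  have hA_iUnion : ⋃ T, A T = {ω | ∃ i, ε ≤ μ[C|ℱ i] ω} := by
    ext ω
    simp only [mem_iUnion, mem_ofPred_eq, A]
    exact ⟨fun ⟨_, i, _, hi⟩ => ⟨i, hi⟩, fun ⟨i, hi⟩ => ⟨{i}, i, Finset.mem_singleton_self i, hi⟩⟩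
  have hlim : Tendsto (fun T => ε * μ.real (A T)) atTop
      (𝓝 (ε * μ.real {ω | ∃ i, ε ≤ μ[C|ℱ i] ω})) := by
    rw [← hA_iUnion]
    exact ((ENNReal.tendsto_toReal (measure_ne_top μ _)).comp
      (tendsto_measure_iUnion_atTop hA_mono)).const_mul ε
  refine le_of_tendsto' hlim fun T => ?_
  exact (mul_measureReal_exists_le_condExp_le_setIntegral ℱ hC ε T).trans
    (setIntegral_le_integral hC (Eventually.of_forall hC0))

end Maximal

theorem mul_measureReal_not_eventually_abs_lt_le [LinearOrder ι] [Countable ι] [Nonempty ι]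
    [IsFiniteMeasure μ] (ℱ : Filtration ι m) {X : ι → Ω → ℝ} {H : Ω → ℝ} (hH0 : 0 ≤ H)
    (hH : Integrable H μ) (hX : ∀ᶠ i in atTop, ∀ᵐ ω ∂μ, |X i ω| ≤ μ[H|ℱ i] ω + H ω)
    {ε : ℝ} (hε : 0 ≤ ε) :
    ε * μ.real {ω | ¬ ∀ᶠ i in atTop, |X i ω| < 2 * ε} ≤ 2 * ∫ ω, H ω ∂μ := by
  set A₁ := {ω | ∃ i, ε ≤ μ[H|ℱ i] ω}
  set A₂ := {ω | ε ≤ H ω}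
  obtain ⟨i₀, hi₀⟩ := eventually_atTop.1 hX
  have hsub : {ω | ¬ ∀ᶠ i in atTop, |X i ω| < 2 * ε} ≤ᵐ[μ] (A₁ ∪ A₂ : Set Ω) := by
    have hbound : ∀ᵐ ω ∂μ, ∀ i : Ici i₀, |X i ω| ≤ μ[H|ℱ i] ω + H ω :=
      ae_all_iff.2 fun i => hi₀ i i.2
    filter_upwards [hbound] with ω hω hω_bad
    change ω ∈ A₁ ∪ A₂
    by_contra! hω'
    simp only [mem_union, mem_ofPred_eq, A₁, A₂, not_or, not_exists, not_le] at hω'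
    exact hω_bad (eventually_atTop.2 ⟨i₀, fun i hi => by
      linarith [hω ⟨i, hi⟩, hω'.1 i, hω'.2]⟩)
  calc ε * μ.real {ω | ¬ ∀ᶠ i in atTop, |X i ω| < 2 * ε}
      ≤ ε * μ.real (A₁ ∪ A₂) := mul_le_mul_of_nonneg_left
        (ENNReal.toReal_mono (measure_ne_top μ _) (measure_mono_ae hsub)) hε
    _ ≤ ε * μ.real A₁ + ε * μ.real A₂ := by
        rw [← mul_add]
        exact mul_le_mul_of_nonneg_left (measureReal_union_le _ _) hε
    _ ≤ ∫ ω, H ω ∂μ + ∫ ω, H ω ∂μ :=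
        add_le_add (mul_measureReal_exists_le_condExp_le_integral ℱ hH hH0 ε)
          (mul_meas_ge_le_integral_of_nonneg (ae_of_all _ hH0) hH ε)
    _ = 2 * ∫ ω, H ω ∂μ := by ring

theorem ae_tendsto_zero_of_abs_le_condExp_add [LinearOrder ι] [Countable ι] [Nonempty ι]
    [IsFiniteMeasure μ] (ℱ : Filtration ι m) {X : ι → Ω → ℝ} {H : κ → Ω → ℝ} {l : Filter κ}
    [l.NeBot] (hH0 : ∀ k, 0 ≤ H k) (hH : ∀ k, Integrable (H k) μ)
    (hH_lim : Tendsto (fun k => ∫ ω, H k ω ∂μ) l (𝓝 0))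
    (hX : ∀ k, ∀ᶠ i in atTop, ∀ᵐ ω ∂μ, |X i ω| ≤ μ[H k|ℱ i] ω + H k ω) :
    ∀ᵐ ω ∂μ, Tendsto (fun i => X i ω) atTop (𝓝 0) := by
  have h_eventually : ∀ ε > 0, ∀ᵐ ω ∂μ, ∀ᶠ i in atTop, |X i ω| < 2 * ε := by
    intro ε hε
    have h_null : ε * μ.real {ω | ¬ ∀ᶠ i in atTop, |X i ω| < 2 * ε} ≤ 0 := by
      simpa using ge_of_tendsto' (hH_lim.const_mul 2) fun k =>
        mul_measureReal_not_eventually_abs_lt_le ℱ (hH0 k) (hH k) (hX k) hε.le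
    rw [ae_iff, ← measureReal_eq_zero_iff]
    exact le_antisymm (nonpos_of_mul_nonpos_right h_null hε) measureReal_nonneg
  have h_all : ∀ᵐ ω ∂μ, ∀ n : ℕ, ∀ᶠ i in atTop, |X i ω| < 2 * (1 / ((n : ℝ) + 1)) :=
    ae_all_iff.2 fun n => h_eventually _ Nat.one_div_pos_of_nat
  filter_upwards [h_all] with ω hω
  refine Metric.tendsto_nhds.2 fun ε hε => ?_
  obtain ⟨n, hn⟩ := exists_nat_one_div_lt (half_pos hε)
  filter_upwards [hω n] with i hi
  rw [Real.dist_0_eq_abs]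
  linarith

theorem ae_tendsto_condExp_iSup [LinearOrder ι] [Countable ι] [IsFiniteMeasure μ]
    (ℱ : Filtration ι m) {s : ℕ → ι} (hs : Monotone s) (hs_cofinal : ∀ i, ∃ n, i ≤ s n)
    (g : Ω → ℝ) :
    ∀ᵐ ω ∂μ, Tendsto (fun i => μ[g|ℱ i] ω) atTop (𝓝 (μ[g|⨆ i, ℱ i] ω)) := by
  have : Nonempty ι := ⟨s 0⟩
  have hle : ⨆ i, ℱ i ≤ m := iSup_le ℱ.le
  set g' := μ[g|⨆ i, ℱ i]
  set 𝒢 := ℱ.comp hs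
  set H : ℕ → Ω → ℝ := fun n => |g' - μ[g'|𝒢 n]|
  have hH_lim : Tendsto (fun n => ∫ ω, H n ω ∂μ) atTop (𝓝 0) := by
    have h := integrable_condExp.tendsto_eLpNorm_condExp (ℱ := 𝒢) (g := g')
      ((ℱ.iSup_comp hs hs_cofinal).symm ▸ stronglyMeasurable_condExp)
    have hH : ∀ n, ∫ ω, H n ω ∂μ = (eLpNorm (μ[g'|𝒢 n] - g') 1 μ).toReal := fun n => by
      rw [eLpNorm_one_eq_lintegral_enorm, ← integral_norm_eq_lintegral_enorm
        (integrable_condExp.sub integrable_condExp).aestronglyMeasurable]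
      exact integral_congr_ae (ae_of_all _ fun ω => abs_sub_comm _ _)
    simpa using ((ENNReal.tendsto_toReal ENNReal.zero_ne_top).comp h).congr fun n => (hH n).symm
  have hX : ∀ n, ∀ᶠ i in atTop, ∀ᵐ ω ∂μ, |μ[g|ℱ i] ω - g' ω| ≤ μ[H n|ℱ i] ω + H n ω := by
    intro n
    filter_upwards [eventually_ge_atTop (s n)] with i hi
    have h_tower : μ[g'|ℱ i] =ᵐ[μ] μ[g|ℱ i] := condExp_condExp_of_le (le_iSup _ i) hle
    have h_known : μ[μ[g'|𝒢 n]|ℱ i] = μ[g'|𝒢 n] := condExp_of_stronglyMeasurable (ℱ.le i)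
      (stronglyMeasurable_condExp.mono (ℱ.mono hi)) integrable_condExp
    have h_sub : μ[g' - μ[g'|𝒢 n]|ℱ i] =ᵐ[μ] μ[g'|ℱ i] - μ[μ[g'|𝒢 n]|ℱ i] :=
      condExp_sub integrable_condExp integrable_condExp _
    filter_upwards [h_tower, h_sub, abs_condExp_ae_le_condExp_abs (m := ℱ i) (μ := μ)
      (g' - μ[g'|𝒢 n])] with ω h_tower h_sub h_abs
    rw [h_known] at h_sub
    simp only [Pi.sub_apply, Pi.abs_apply] at h_sub h_abs
    calc |μ[g|ℱ i] ω - g' ω|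
        = |μ[g' - μ[g'|𝒢 n]|ℱ i] ω + (μ[g'|𝒢 n] ω - g' ω)| := by
          rw [h_sub, ← h_tower]
          congr 1
          ring
      _ ≤ μ[H n|ℱ i] ω + H n ω :=
          (abs_add_le _ _).trans (add_le_add h_abs (abs_sub_comm _ _).le)
  filter_upwards [ae_tendsto_zero_of_abs_le_condExp_add ℱ (fun n ω => abs_nonneg _)
    (fun n => (integrable_condExp.sub integrable_condExp).abs) hH_lim hX] with ω h
  exact tendsto_sub_nhds_zero_iff.1 h

theorem ae_tendsto_condExp_sub_condExp_of_ae_tendsto [LinearOrder ι] [Countable ι] [Nonempty ι]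
    [IsFiniteMeasure μ] (ℱ : Filtration ι m) {V : ι → Ω → ℝ} {Y G : Ω → ℝ}
    (hV : ∀ i, AEStronglyMeasurable (V i) μ) (hG : Integrable G μ)
    (hVG : ∀ i, ∀ᵐ ω ∂μ, |V i ω| ≤ G ω)
    (hVY : ∀ᵐ ω ∂μ, Tendsto (fun i => V i ω) atTop (𝓝 (Y ω))) :
    ∀ᵐ ω ∂μ, Tendsto (fun i => μ[V i|ℱ i] ω - μ[Y|ℱ i] ω) atTop (𝓝 0) := by
  have hYG : ∀ᵐ ω ∂μ, |Y ω| ≤ G ω := ae_abs_le_of_ae_tendsto hVG hVY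
  have hY : Integrable Y μ :=
    hG.mono' (aestronglyMeasurable_of_tendsto_ae atTop hV hVY) hYG
  have hV_int : ∀ i, Integrable (V i) μ := fun i => hG.mono' (hV i) (hVG i)
  have hVY_int : ∀ i, Integrable (V i - Y) μ := fun i => (hV_int i).sub hY
  have hdiff : ∀ᵐ ω ∂μ, ∀ i, |V i ω - Y ω| ≤ 2 * G ω := by
    filter_upwards [ae_all_iff.2 hVG, hYG] with ω hVω hYω i
    linarith [abs_sub (V i ω) (Y ω), hVω i]
  set R : ι → Ω → ℝ := fun j ω => ⨆ i : Ici j, |V i ω - Y ω|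
  have hR0 : ∀ j, 0 ≤ R j := fun j ω => Real.iSup_nonneg fun i => abs_nonneg _
  have hR_le : ∀ᵐ ω ∂μ, ∀ j, R j ω ≤ 2 * G ω := by
    filter_upwards [hdiff] with ω h j
    exact ciSup_le fun i => h i
  have hR_ge : ∀ᵐ ω ∂μ, ∀ j, ∀ i ≥ j, |V i ω - Y ω| ≤ R j ω := by
    filter_upwards [hdiff] with ω h j i hi
    exact le_ciSup (f := fun i : Ici j => |V i ω - Y ω|)
      ⟨2 * G ω, by rintro _ ⟨i, rfl⟩; exact h i⟩ ⟨i, hi⟩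
  have hR_bound : ∀ j, ∀ᵐ ω ∂μ, ‖R j ω‖ ≤ 2 * G ω := fun j => by
    filter_upwards [hR_le] with ω h
    rw [Real.norm_of_nonneg (hR0 j ω)]
    exact h j
  have hR_meas : ∀ j, AEStronglyMeasurable (R j) μ := fun j =>
    (AEMeasurable.iSup fun i : Ici j => (hVY_int i).aemeasurable.abs).aestronglyMeasurable
  have hR_int_lim : Tendsto (fun j => ∫ ω, R j ω ∂μ) atTop (𝓝 0) := by
    simpa using tendsto_integral_filter_of_dominated_convergence (fun ω => 2 * G ω)
      (Eventually.of_forall hR_meas) (Eventually.of_forall hR_bound) (hG.const_mul 2)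
      (hVY.mono fun ω => tendsto_iSup_Ici_abs_sub)
  have hR_int : ∀ j, Integrable (R j) μ := fun j =>
    (hG.const_mul 2).mono' (hR_meas j) (hR_bound j)
  refine ae_tendsto_zero_of_abs_le_condExp_add ℱ hR0 hR_int hR_int_lim fun j => ?_
  filter_upwards [eventually_ge_atTop j] with i hi
  have h_abs := ae_abs_condExp_le_condExp (m' := ℱ i) (hVY_int i).aestronglyMeasurable
    (hR_int j) (by filter_upwards [hR_ge] with ω h using h j i hi)
  filter_upwards [condExp_sub (hV_int i) hY (ℱ i), h_abs] with ω h_sub h_abs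
  rw [Pi.sub_apply] at h_sub
  rw [← h_sub]
  exact h_abs.trans (le_add_of_nonneg_right (hR0 j ω))

end MeasureTheory

theorem tendsto_atTop_of_tendsto_ratCast {α : Type*} [PseudoMetricSpace α] {f : ℝ → α} {y : α}
    (hf : ∀ t, ContinuousWithinAt f (Ici t) t)
    (hq : Tendsto (fun q : ℚ => f q) atTop (𝓝 y)) : Tendsto f atTop (𝓝 y) := by
  refine Metric.tendsto_atTop.2 fun ε hε => ?_
  obtain ⟨Q, hQ⟩ := Metric.tendsto_atTop.1 hq (ε / 2) (half_pos hε)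
  refine ⟨Q, fun t ht => ?_⟩
  obtain ⟨δ, hδ, hδt⟩ := Metric.continuousWithinAt_iff.1 (hf t) (ε / 2) (half_pos hε)
  obtain ⟨q, htq, hqδ⟩ := exists_rat_btwn (lt_add_of_pos_right t hδ)
  have hQq : Q ≤ q := by exact_mod_cast ht.trans htq.le
  have hqt : dist (q : ℝ) t < δ := by
    rw [Real.dist_eq, abs_of_pos (sub_pos.2 htq)]
    linarith
  calc dist (f t) y ≤ dist (f q) (f t) + dist (f q) y := dist_triangle_left _ _ _
    _ < ε / 2 + ε / 2 := add_lt_add (hδt htq.le hqt) (hQ q hQq)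
    _ = ε := add_halves ε

/-- The 'tower trick' (Proposition 5.4): if `U` is a nonnegative process with
integrable supremum, `t ↦ E[U_t | F_t]` is càdlàg, and `E[U_t | F_∞] → Y` a.s., then
`E[U_t | F_t] → Y` a.s. as `t → ∞`. -/
theorem tower_trick {Ω : Type*} {m : MeasurableSpace Ω} {μ : Measure Ω}
    [IsProbabilityMeasure μ]
    (ℱ : Filtration ℝ m) (U : ℝ → Ω → ℝ) (Y : Ω → ℝ)
    (hpos : ∀ t ω, 0 ≤ U t ω)
    (hmeas : ∀ t, Measurable (U t))
    (hbdd : ∀ ω, BddAbove (Set.range fun t => U t ω))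
    (hsup : Integrable (fun ω => ⨆ t, U t ω) μ)
    (hcadlag : ∀ᵐ ω ∂μ, ∀ t : ℝ,
      ContinuousWithinAt (fun s => (μ[U s | ℱ s]) ω) (Ici t) t
      ∧ (0 < t → ∃ l, Tendsto (fun s => (μ[U s | ℱ s]) ω) (𝓝[<] t) (𝓝 l)))
    (hlim : ∀ᵐ ω ∂μ,
      Tendsto (fun t => (μ[U t | ⨆ s, (ℱ s : MeasurableSpace Ω)]) ω) atTop (𝓝 (Y ω))) :
    ∀ᵐ ω ∂μ, Tendsto (fun t => (μ[U t | ℱ t]) ω) atTop (𝓝 (Y ω)) := by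
  set ℱ_inf := ⨆ s, (ℱ s : MeasurableSpace Ω)
  have hle : ℱ_inf ≤ m := iSup_le ℱ.le
  set 𝒬 := ℱ.comp Rat.cast_mono
  have h𝒬 : ⨆ q, 𝒬 q = ℱ_inf :=
    ℱ.iSup_comp Rat.cast_mono fun t => (exists_rat_gt t).imp fun _ h => h.le
  have hWG : ∀ t, ∀ᵐ ω ∂μ, |μ[U t|ℱ_inf] ω| ≤ μ[(fun ω => ⨆ t, U t ω)|ℱ_inf] ω := fun t =>
    ae_abs_condExp_le_condExp (hmeas t).aestronglyMeasurable hsup (ae_of_all _ fun ω => by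
      rw [abs_of_nonneg (hpos t ω)]
      exact le_ciSup (hbdd ω) t)
  have hWY : ∀ᵐ ω ∂μ, Tendsto (fun q : ℚ => μ[U q|ℱ_inf] ω) atTop (𝓝 (Y ω)) := by
    filter_upwards [hlim] with ω h
    exact h.comp (tendsto_ratCast_atTop_iff.2 tendsto_id)
  have hY : μ[Y|ℱ_inf] =ᵐ[μ] Y := condExp_ae_eq_of_ae_tendsto hle
    (V := fun q : ℚ => μ[U q|ℱ_inf]) (fun q => stronglyMeasurable_condExp) integrable_condExp
    (fun q => hWG q) hWY
  have h_tower : ∀ᵐ ω ∂μ, ∀ q : ℚ, μ[μ[U q|ℱ_inf]|𝒬 q] ω = μ[U q|𝒬 q] ω :=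
    ae_all_iff.2 fun q => condExp_condExp_of_le (le_iSup (fun s => ℱ s) (q : ℝ)) hle
  have h_hunt := ae_tendsto_condExp_sub_condExp_of_ae_tendsto 𝒬
    (fun q => integrable_condExp.aestronglyMeasurable) integrable_condExp (fun q : ℚ => hWG q) hWY
  have h_levy := ae_tendsto_condExp_iSup (μ := μ) 𝒬 Nat.mono_cast exists_nat_ge Y
  rw [h𝒬] at h_levy
  filter_upwards [h_hunt, h_levy, hY, h_tower, hcadlag] with ω h_hunt h_levy hY h_tower hc
  refine tendsto_atTop_of_tendsto_ratCast (fun t => (hc t).1) ?_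
  have h := h_hunt.add h_levy
  simp only [sub_add_cancel, zero_add, hY] at h
  exact h.congr h_tower
end

section
/- Under the exponential ergodicity assumption, suppose that for all x ∈ (0,c] and s ≥ 0, |E_x[f(Y_s)] − ⟨f,ν⟩| ≤ ‖f_w‖ ((c/x)^w + C) e^{−ks}, where f_w(x) = (x/c)^w f(x). Define R_{s,t} = Σ_u e^{−λt} |E_{Z_u(t)}[f(Y_s)] − ⟨f,ν⟩|. Then E_x[R_{s,t}] ≤ e^{−ks} ‖f_w‖ (E_x[e^{w(b − η^b_t)}] + C e^{−λt}E_x[N_t]), and if moreover sup_t E_x[e^{w(b−η^b_t)}] ≤ C' < ∞ and e^{−λt}E_x[N_t] = 1, then E_x[R_{s,s}] ≤ e^{−ks}‖f_w‖(C'+C), which is summable along lattice times s = nδ, so R_{nδ,nδ} → 0 almost surely by Borel–Cantelli. -/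
open MeasureTheory Set Filter Topology

/-!
Each particle alive at time `t` sits in `(0, c]`, where the spine's ergodicity bound applies, so
`R_{s,t}` is dominated pointwise by `e^{-ks} ‖f_w‖ (Σ_u e^{-λt} (c/Z_u(t))^w + C e^{-λt} N_t)`.
Taking expectations, the many-to-one formula turns the first sum into `E_x[e^{w(b-η^b_t)}]`.
On the diagonal `s = t = nδ` the resulting bound decays geometrically in `n`, so
`Σ_n E_x[R_{nδ,nδ}] < ∞`; hence `Σ_n R_{nδ,nδ}` converges almost surely and its terms tend to `0`.
-/

theorem Finset.sum_mul_abs_le_of_abs_le {ι : Type*} (S : Finset ι) {g h : ι → ℝ}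
    {a e F C : ℝ} (ha : 0 ≤ a) (hg : ∀ u ∈ S, |g u| ≤ F * (h u + C) * e) :
    ∑ u ∈ S, a * |g u| ≤ e * F * (∑ u ∈ S, a * h u + C * (a * S.card)) :=
  calc ∑ u ∈ S, a * |g u|
      ≤ ∑ u ∈ S, a * (F * (h u + C) * e) :=
        Finset.sum_le_sum fun u hu => mul_le_mul_of_nonneg_left (hg u hu) ha
    _ = e * F * (∑ u ∈ S, a * h u + C * (a * S.card)) := by
        simp only [mul_add, add_mul, Finset.sum_add_distrib, ← Finset.sum_mul, ← Finset.mul_sum,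
          Finset.sum_const, nsmul_eq_mul]
        ring

namespace MeasureTheory

section RandomPopulation

variable {Ω ι : Type*} [MeasurableSpace Ω] {μ : Measure Ω} (U : Ω → Finset ι)
  {g h : ι → Ω → ℝ} {a e F C : ℝ}

theorem integrable_sum_mul_abs_of_abs_le (ha : 0 ≤ a)
    (hmeas : AEStronglyMeasurable (fun ω => ∑ u ∈ U ω, a * |g u ω|) μ)
    (hh : Integrable (fun ω => ∑ u ∈ U ω, a * h u ω) μ)
    (hN : Integrable (fun ω => ((U ω).card : ℝ)) μ)
    (hg : ∀ ω, ∀ u ∈ U ω, |g u ω| ≤ F * (h u ω + C) * e) :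
    Integrable (fun ω => ∑ u ∈ U ω, a * |g u ω|) μ := by
  refine Integrable.mono' ((hh.add ((hN.const_mul a).const_mul C)).const_mul (e * F)) hmeas
    (Eventually.of_forall fun ω => ?_)
  rw [Real.norm_of_nonneg (Finset.sum_nonneg fun u _ => mul_nonneg ha (abs_nonneg _))]
  exact (U ω).sum_mul_abs_le_of_abs_le ha (hg ω)

theorem integral_sum_mul_abs_le_of_abs_le (ha : 0 ≤ a)
    (hh : Integrable (fun ω => ∑ u ∈ U ω, a * h u ω) μ)
    (hN : Integrable (fun ω => ((U ω).card : ℝ)) μ)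
    (hg : ∀ ω, ∀ u ∈ U ω, |g u ω| ≤ F * (h u ω + C) * e) :
    ∫ ω, ∑ u ∈ U ω, a * |g u ω| ∂μ
      ≤ e * F * (∫ ω, ∑ u ∈ U ω, a * h u ω ∂μ + C * (a * ∫ ω, ((U ω).card : ℝ) ∂μ)) := by
  have hCN : Integrable (fun ω => C * (a * (U ω).card)) μ := (hN.const_mul a).const_mul C
  calc ∫ ω, ∑ u ∈ U ω, a * |g u ω| ∂μ
      ≤ ∫ ω, e * F * (∑ u ∈ U ω, a * h u ω + C * (a * (U ω).card)) ∂μ :=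
        integral_mono_of_nonneg
          (Eventually.of_forall fun ω =>
            Finset.sum_nonneg fun u _ => mul_nonneg ha (abs_nonneg _))
          ((hh.add hCN).const_mul _)
          (Eventually.of_forall fun ω => (U ω).sum_mul_abs_le_of_abs_le ha (hg ω))
    _ = e * F * (∫ ω, ∑ u ∈ U ω, a * h u ω ∂μ + C * (a * ∫ ω, ((U ω).card : ℝ) ∂μ)) := by
        rw [integral_const_mul, integral_add hh hCN, integral_const_mul, integral_const_mul]

end RandomPopulation

theorem ae_tendsto_zero_of_summable_integral_norm {X E : Type*} [MeasurableSpace X]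
    {μ : Measure X} [NormedAddCommGroup E] {f : ℕ → X → E} (hf : ∀ n, Integrable (f n) μ)
    (hsum : Summable fun n => ∫ x, ‖f n x‖ ∂μ) :
    ∀ᵐ x ∂μ, Tendsto (fun n => f n x) atTop (𝓝 0) := by
  have hL1 : ∑' n, eLpNorm (f n) 1 μ ≠ ⊤ := by
    simp_rw [eLpNorm_one_eq_lintegral_enorm, ← ofReal_integral_norm_eq_lintegral_enorm (hf _),
      ← ENNReal.ofReal_tsum_of_nonneg (fun n => integral_nonneg fun x => norm_nonneg _) hsum]
    exact ENNReal.ofReal_ne_top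
  filter_upwards [summable_norm_of_tsum_eLpNorm_ne_top le_rfl (fun n => (hf n).1) hL1]
    with x hx
  exact tendsto_zero_iff_norm_tendsto_zero.2 hx.tendsto_atTop_zero

end MeasureTheory

theorem Real.summable_exp_neg_mul_nat_mul {k δ : ℝ} (hk : 0 < k) (hδ : 0 < δ) :
    Summable fun n : ℕ => Real.exp (-k * (n * δ)) := by
  have h := Real.summable_exp_nat_mul_iff.2 (neg_neg_of_pos (mul_pos hk hδ))
  convert h using 3 with n
  ring

theorem ergodicity_transfer_general {Ω ι : Type*} [MeasurableSpace Ω]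
    (μ : Measure Ω) [IsProbabilityMeasure μ]
    (c b lam w k C C' Fw nuf δ : ℝ)
    (hk : 0 < k)
    (hδ : 0 < δ) (hFw : 0 ≤ Fw)
    (U : ℝ → Ω → Finset ι) (Z : ι → ℝ → Ω → ℝ) (ηb : ℝ → Ω → ℝ)
    (φ : ℝ → ℝ → ℝ)
    (hZ : ∀ t ω, ∀ u ∈ U t ω, Z u t ω ∈ Ioc (0:ℝ) c)
    (hRmeas : ∀ s t : ℝ, Measurable
      (fun ω => ∑ u ∈ U t ω, Real.exp (-lam * t) * |φ (Z u t ω) s - nuf|))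
    (hNint : ∀ t : ℝ, Integrable (fun ω => ((U t ω).card : ℝ)) μ)
    (hηint : ∀ t : ℝ, Integrable (fun ω => Real.exp (w * (b - ηb t ω))) μ)
    (hbound : ∀ x ∈ Ioc (0:ℝ) c, ∀ s : ℝ, 0 ≤ s →
      |φ x s - nuf| ≤ Fw * ((c / x) ^ w + C) * Real.exp (-k * s))
    (hm2o : ∀ t : ℝ, 0 ≤ t →
      (∫ ω, (∑ u ∈ U t ω, Real.exp (-lam * t) * (c / Z u t ω) ^ w) ∂μ)
        = ∫ ω, Real.exp (w * (b - ηb t ω)) ∂μ) :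
    (∀ s t : ℝ, 0 ≤ s → 0 ≤ t →
      (∫ ω, (∑ u ∈ U t ω, Real.exp (-lam * t) * |φ (Z u t ω) s - nuf|) ∂μ)
        ≤ Real.exp (-k * s) * Fw *
            ((∫ ω, Real.exp (w * (b - ηb t ω)) ∂μ)
              + C * (Real.exp (-lam * t) * ∫ ω, ((U t ω).card : ℝ) ∂μ)))
    ∧ ((∀ t : ℝ, 0 ≤ t → (∫ ω, Real.exp (w * (b - ηb t ω)) ∂μ) ≤ C') →
       (∀ t : ℝ, 0 ≤ t → Real.exp (-lam * t) * (∫ ω, ((U t ω).card : ℝ) ∂μ) = 1) →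
       (∀ s : ℝ, 0 ≤ s →
          (∫ ω, (∑ u ∈ U s ω, Real.exp (-lam * s) * |φ (Z u s ω) s - nuf|) ∂μ)
            ≤ Real.exp (-k * s) * Fw * (C' + C))
       ∧ (∀ᵐ ω ∂μ, Tendsto
            (fun n : ℕ => ∑ u ∈ U (n * δ) ω,
              Real.exp (-lam * (n * δ)) * |φ (Z u (n * δ) ω) (n * δ) - nuf|)
            atTop (𝓝 0))) := by
  -- A non-integrable function has integral `0`, but the many-to-one formula makes it positive.
  have hsum_pow : ∀ t, 0 ≤ t →
      Integrable (fun ω => ∑ u ∈ U t ω, Real.exp (-lam * t) * (c / Z u t ω) ^ w) μ :=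
    fun t ht => Integrable.of_integral_ne_zero <| by
      rw [hm2o t ht]; exact (integral_exp_pos (hηint t)).ne'
  have hspine : ∀ s t, 0 ≤ s → ∀ ω, ∀ u ∈ U t ω,
      |φ (Z u t ω) s - nuf| ≤ Fw * ((c / Z u t ω) ^ w + C) * Real.exp (-k * s) :=
    fun s t hs ω u hu => hbound _ (hZ t ω u hu) s hs
  have hmean (s t : ℝ) (hs : 0 ≤ s) (ht : 0 ≤ t) :=
    hm2o t ht ▸ integral_sum_mul_abs_le_of_abs_le (U t) (Real.exp_nonneg _) (hsum_pow t ht)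
      (hNint t) (hspine s t hs)
  refine ⟨hmean, fun hη hN => ?_⟩
  have hdiag : ∀ s : ℝ, 0 ≤ s →
      (∫ ω, (∑ u ∈ U s ω, Real.exp (-lam * s) * |φ (Z u s ω) s - nuf|) ∂μ)
        ≤ Real.exp (-k * s) * Fw * (C' + C) := fun s hs =>
    (hmean s s hs hs).trans <| by
      rw [hN s hs, mul_one]
      gcongr
      exact hη s hs
  have hlattice : ∀ n : ℕ, 0 ≤ (n : ℝ) * δ := fun n => by positivity
  refine ⟨hdiag, ae_tendsto_zero_of_summable_integral_norm (fun n => ?_) ?_⟩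
  · exact integrable_sum_mul_abs_of_abs_le (U _) (Real.exp_nonneg _)
      (hRmeas _ _).aestronglyMeasurable (hsum_pow _ (hlattice n)) (hNint _)
      (hspine _ _ (hlattice n))
  · refine ((Real.summable_exp_neg_mul_nat_mul hk hδ).mul_right (Fw * (C' + C))).of_nonneg_of_le
      (fun n => integral_nonneg fun _ => norm_nonneg _) fun n => ?_
    refine (integral_congr_ae (Eventually.of_forall fun ω => Real.norm_of_nonneg
      (Finset.sum_nonneg fun _ _ => mul_nonneg (Real.exp_nonneg _) (abs_nonneg _)))).trans_le
      ((hdiag _ (hlattice n)).trans_eq (mul_assoc _ _ _))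

/-- Under exponential ergodicity of the spine
(`|E_x[f(Y_s)] − ⟨f,ν⟩| ≤ ‖f_w‖((c/x)^w + C)e^{−ks}`, encoded by `φ x s = E_x[f(Y_s)]`),
the quantity `R_{s,t} = Σ_u e^{−λt}|E_{Z_u(t)}[f(Y_s)] − ⟨f,ν⟩|` satisfies
`E_x[R_{s,t}] ≤ e^{−ks}‖f_w‖(E_x[e^{w(b−η^b_t)}] + C e^{−λt}E_x[N_t])`; if moreover
`sup_t E_x[e^{w(b−η^b_t)}] ≤ C'` and `e^{−λt}E_x[N_t] = 1`, then
`E_x[R_{s,s}] ≤ e^{−ks}‖f_w‖(C' + C)`, which is summable along lattice times `s = nδ`,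
so `R_{nδ,nδ} → 0` almost surely. -/
theorem ergodicity_transfer {Ω ι : Type*} [MeasurableSpace Ω]
    (μ : Measure Ω) [IsProbabilityMeasure μ]
    (c b lam w k C C' Fw nuf δ : ℝ)
    (hc : 0 < c) (hb : b = Real.log c) (hlam : 0 < lam) (hw : 0 < w) (hk : 0 < k)
    (hδ : 0 < δ) (hC : 0 ≤ C) (hFw : 0 ≤ Fw)
    (U : ℝ → Ω → Finset ι) (Z : ι → ℝ → Ω → ℝ) (ηb : ℝ → Ω → ℝ)
    (φ : ℝ → ℝ → ℝ)
    (hZ : ∀ t ω, ∀ u ∈ U t ω, Z u t ω ∈ Ioc (0:ℝ) c)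
    (hRmeas : ∀ s t : ℝ, Measurable
      (fun ω => ∑ u ∈ U t ω, Real.exp (-lam * t) * |φ (Z u t ω) s - nuf|))
    (hNint : ∀ t : ℝ, Integrable (fun ω => ((U t ω).card : ℝ)) μ)
    (hηint : ∀ t : ℝ, Integrable (fun ω => Real.exp (w * (b - ηb t ω))) μ)
    (hbound : ∀ x ∈ Ioc (0:ℝ) c, ∀ s : ℝ, 0 ≤ s →
      |φ x s - nuf| ≤ Fw * ((c / x) ^ w + C) * Real.exp (-k * s))
    (hm2o : ∀ t : ℝ, 0 ≤ t →
      (∫ ω, (∑ u ∈ U t ω, Real.exp (-lam * t) * (c / Z u t ω) ^ w) ∂μ)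
        = ∫ ω, Real.exp (w * (b - ηb t ω)) ∂μ) :
    (∀ s t : ℝ, 0 ≤ s → 0 ≤ t →
      (∫ ω, (∑ u ∈ U t ω, Real.exp (-lam * t) * |φ (Z u t ω) s - nuf|) ∂μ)
        ≤ Real.exp (-k * s) * Fw *
            ((∫ ω, Real.exp (w * (b - ηb t ω)) ∂μ)
              + C * (Real.exp (-lam * t) * ∫ ω, ((U t ω).card : ℝ) ∂μ)))
    ∧ ((∀ t : ℝ, 0 ≤ t → (∫ ω, Real.exp (w * (b - ηb t ω)) ∂μ) ≤ C') →
       (∀ t : ℝ, 0 ≤ t → Real.exp (-lam * t) * (∫ ω, ((U t ω).card : ℝ) ∂μ) = 1) →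
       (∀ s : ℝ, 0 ≤ s →
          (∫ ω, (∑ u ∈ U s ω, Real.exp (-lam * s) * |φ (Z u s ω) s - nuf|) ∂μ)
            ≤ Real.exp (-k * s) * Fw * (C' + C))
       ∧ (∀ᵐ ω ∂μ, Tendsto
            (fun n : ℕ => ∑ u ∈ U (n * δ) ω,
              Real.exp (-lam * (n * δ)) * |φ (Z u (n * δ) ω) (n * δ) - nuf|)
            atTop (𝓝 0))) :=
  ergodicity_transfer_general μ c b lam w k C C' Fw nuf δ hk hδ hFw U Z ηb φ hZ hRmeas hNint hηint
    hbound hm2o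
end
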